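/- The unnormalized ℤ_M zero-flux ground state Φ_M = (∏_v (1/M) ∑_{j=0}^{M−1} B̂_v^j) δ₀ satisfies: Φ_M ≠ 0; Â_{(x,y)} Φ_M = Φ_M for every plaquette (x,y); B̂_v Φ_M = Φ_M for every star v; and Ŵ_x Φ_M = Φ_M for every column x. -/

import Mathlib

open Finset

noncomputable section

/-- The qudit Hilbert space: complex functions on configurations `ι → ZMod M`. -/
abbrev QuditSpace (ι : Type*) (M : ℕ) := (ι → ZMod M) → ℂ

/-- The root of unity `ω = exp(2πi/M)`. -/
def omegaM (M : ℕ) : ℂ := Complex.exp (2 * Real.pi * Complex.I / M)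

/-- The clock operator `C_u`: `(C_u ψ)(σ) = ω^{∑_b u(b)·σ(b)} ψ(σ)`
(well-defined since `ω^M = 1`). -/
def Cop {ι : Type*} [Fintype ι] {M : ℕ} (u : ι → ZMod M) :
    Module.End ℂ (QuditSpace ι M) where
  toFun ψ := fun σ => omegaM M ^ (∑ b, u b * σ b).val * ψ σ
  map_add' ψ φ := by funext σ; simp [mul_add]
  map_smul' c ψ := by funext σ; simp; ring

/-- The shift operator `S_u`: `(S_u ψ)(σ) = ψ(σ − u)`. -/
def Sop {ι : Type*} {M : ℕ} (u : ι → ZMod M) :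
    Module.End ℂ (QuditSpace ι M) where
  toFun ψ := fun σ => ψ (σ - u)
  map_add' _ _ := rfl
  map_smul' _ _ := rfl

variable (M Lx Ly : ℕ)

/-- Vertices of the `L_x × L_y` square lattice on the torus. -/
abbrev Vertex := ZMod Lx × ZMod Ly

/-- Bonds of the lattice: `((x,y), 0)` is the horizontal bond from `(x,y)` to
`(x+1,y)`, and `((x,y), 1)` the vertical bond from `(x,y)` to `(x,y+1)`. -/
abbrev Bond := (ZMod Lx × ZMod Ly) × Fin 2

variable [NeZero Lx] [NeZero Ly]

/-- The oriented star vector `u_v`: value `1` on `((x,y),0)` and `((x,y),1)`,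
value `−1` on `((x−1,y),0)` and `((x,y−1),1)`, and `0` elsewhere. -/
def starVec (v : Vertex Lx Ly) : Bond Lx Ly → ZMod M := fun b =>
  (if b = (v, 0) then (1 : ZMod M) else 0) + (if b = (v, 1) then 1 else 0) +
    (if b = ((v.1 - 1, v.2), 0) then -1 else 0) +
    (if b = ((v.1, v.2 - 1), 1) then -1 else 0)

/-- The oriented plaquette vector `w_{(x,y)}`: value `1` on `((x,y),0)` and
`((x+1,y),1)`, value `−1` on `((x,y+1),0)` and `((x,y),1)`, `0` elsewhere. -/
def plaqVec (v : Vertex Lx Ly) : Bond Lx Ly → ZMod M := fun b =>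
  (if b = (v, 0) then (1 : ZMod M) else 0) +
    (if b = ((v.1 + 1, v.2), 1) then 1 else 0) +
    (if b = ((v.1, v.2 + 1), 0) then -1 else 0) +
    (if b = (v, 1) then -1 else 0)

/-- The star operator `B̂_v = S_{u_v}`. -/
def Bhat (v : Vertex Lx Ly) : Module.End ℂ (QuditSpace (Bond Lx Ly) M) :=
  Sop (starVec M Lx Ly v)

/-- The plaquette operator `Â_{(x,y)} = C_{w_{(x,y)}}`. -/
def Ahat (v : Vertex Lx Ly) : Module.End ℂ (QuditSpace (Bond Lx Ly) M) :=
  Cop (plaqVec M Lx Ly v)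

/-- The vertical clock Wilson loop `Ŵ_x = C_{𝟙_{Γ_x}}`,
`Γ_x = {((x,y),1) : y}`. -/
def What (x : ZMod Lx) : Module.End ℂ (QuditSpace (Bond Lx Ly) M) :=
  Cop (fun b => if b.1.1 = x ∧ b.2 = 1 then (1 : ZMod M) else 0)

/-- The horizontal shift (dual) Wilson loop `V̂_y = S_{𝟙_{Γ̃_y}}`,
`Γ̃_y = {((x,y),1) : x}`. -/
def Vhat (y : ZMod Ly) : Module.End ℂ (QuditSpace (Bond Lx Ly) M) :=
  Sop (fun b => if b.1.2 = y ∧ b.2 = 1 then (1 : ZMod M) else 0)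

/-- The basis vector at the all-zeros configuration. -/
def delta0M : QuditSpace (Bond Lx Ly) M := fun σ => if σ = 0 then 1 else 0

lemma sop_commute {ι : Type*} {M : ℕ} (u u' : ι → ZMod M) :
    Commute (Sop u) (Sop u') := by
  apply LinearMap.ext; intro ψ; funext σ
  simp only [Module.End.mul_apply]
  show ψ (σ - u - u') = ψ (σ - u' - u)
  rw [sub_right_comm]

/-- The star projector `(1/M) ∑_{j=0}^{M−1} B̂_v^j`. -/
def starProjM (v : Vertex Lx Ly) :
    Module.End ℂ (QuditSpace (Bond Lx Ly) M) :=
  (M : ℂ)⁻¹ • ∑ j ∈ Finset.range M, (Bhat M Lx Ly v) ^ j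

lemma starProjM_commute (v w : Vertex Lx Ly) :
    Commute (starProjM M Lx Ly v) (starProjM M Lx Ly w) := by
  have h : Commute (Bhat M Lx Ly v) (Bhat M Lx Ly w) := sop_commute _ _
  have h' : Commute (∑ j ∈ Finset.range M, (Bhat M Lx Ly v) ^ j)
      (∑ j ∈ Finset.range M, (Bhat M Lx Ly w) ^ j) :=
    Commute.sum_left _ _ _ (fun j _ =>
      Commute.sum_right _ _ _ (fun k _ => h.pow_pow j k))
  exact (h'.smul_left _).smul_right _

/-- The (unnormalized) `ℤ_M` zero-flux ground state
`Φ_M = (∏_v (1/M) ∑_j B̂_v^j) δ₀` (the star operators commute, so the product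
is well-defined). -/
def PhiM : QuditSpace (Bond Lx Ly) M :=
  (Finset.univ.noncommProd (fun v : Vertex Lx Ly => starProjM M Lx Ly v)
    (fun v _ w _ _ => starProjM_commute M Lx Ly v w)) (delta0M M Lx Ly)

/-! Since `B̂_v ^ M = 1`, the star projector `(1/M) ∑_j B̂_v^j` absorbs `B̂_v`, so `B̂_v Φ_M = Φ_M`.
A clock operator `C_u` commutes with the shift `S_t` when `∑_b u b * t b = 0`, and it
fixes `δ₀`; plaquette vectors and the vertical loops `𝟙_{Γ_x}` are orthogonal to every star
vector (a star meets them in two bonds of opposite orientation, or not at all), so `Â` and `Ŵ`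
commute with all star projectors and fix `Φ_M`. Finally, shifts, hence the projectors, preserve
the total amplitude `∑_σ ψ σ`, which is `1` for `δ₀`; so `Φ_M ≠ 0`. -/

lemma mul_geom_sum_of_pow_eq_one {R : Type*} [Ring R] {x : R} {n : ℕ} (h : x ^ n = 1) :
    x * ∑ i ∈ range n, x ^ i = ∑ i ∈ range n, x ^ i := by
  have := mul_geom_sum x n
  rwa [h, sub_self, sub_mul, one_mul, sub_eq_zero] at this

section QuditOperators

variable {ι : Type*} {M}

lemma sop_zero : Sop (0 : ι → ZMod M) = 1 := by
  ext ψ σ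
  simp [Sop]

lemma sop_add (u t : ι → ZMod M) : Sop (u + t) = Sop u * Sop t := by
  ext ψ σ
  simp only [Sop, Module.End.mul_apply, LinearMap.coe_mk, AddHom.coe_mk, sub_add_eq_sub_sub]

lemma sop_pow (u : ι → ZMod M) (j : ℕ) : Sop u ^ j = Sop (j • u) := by
  induction j with
  | zero => rw [pow_zero, zero_smul, sop_zero]
  | succ j ih => rw [pow_succ, ih, ← sop_add, succ_nsmul]

lemma sop_pow_card (u : ι → ZMod M) : Sop u ^ M = 1 := by
  rw [sop_pow, ← sop_zero]
  congr 1
  ext b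
  simp

lemma sum_sop_apply [Fintype ι] [DecidableEq ι] [NeZero M] (u : ι → ZMod M)
    (ψ : QuditSpace ι M) :
    ∑ σ, Sop u ψ σ = ∑ σ, ψ σ :=
  Fintype.sum_equiv (Equiv.subRight u) _ _ fun _ => rfl

lemma cop_commute_sop [Fintype ι] {u t : ι → ZMod M} (h : ∑ b, u b * t b = 0) :
    Commute (Cop u) (Sop t) := by
  ext ψ σ
  have hpair : ∑ b, u b * (σ - t) b = ∑ b, u b * σ b := by
    simp only [Pi.sub_apply, mul_sub, Finset.sum_sub_distrib, h, sub_zero]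
  simp only [Module.End.mul_apply, Cop, Sop, LinearMap.coe_mk, AddHom.coe_mk, hpair]

end QuditOperators

def sumPreserving (ι : Type*) [Fintype ι] [DecidableEq ι] (M : ℕ) [NeZero M] :
    Submonoid (Module.End ℂ (QuditSpace ι M)) where
  carrier := {T | ∀ ψ, ∑ σ, T ψ σ = ∑ σ, ψ σ}
  one_mem' _ := rfl
  mul_mem' hS hT ψ := (hS _).trans (hT ψ)

omit [NeZero Lx] [NeZero Ly] in
lemma bhat_mul_starProjM (v : Vertex Lx Ly) :
    Bhat M Lx Ly v * starProjM M Lx Ly v = starProjM M Lx Ly v := by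
  have hpow : Bhat M Lx Ly v ^ M = 1 := sop_pow_card _
  rw [starProjM, mul_smul_comm, mul_geom_sum_of_pow_eq_one hpow]

lemma cop_commute_starProjM {u : Bond Lx Ly → ZMod M} {v : Vertex Lx Ly}
    (h : ∑ b, u b * starVec M Lx Ly v b = 0) :
    Commute (Cop u) (starProjM M Lx Ly v) :=
  ((Commute.sum_right _ _ _ fun j _ => (cop_commute_sop h).pow_right j)).smul_right _

lemma starProjM_mem_sumPreserving [NeZero M] (v : Vertex Lx Ly) :
    starProjM M Lx Ly v ∈ sumPreserving (Bond Lx Ly) M := by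
  intro ψ
  have hM : (M : ℂ) ≠ 0 := Nat.cast_ne_zero.mpr (NeZero.ne M)
  calc ∑ σ, starProjM M Lx Ly v ψ σ
      = (M : ℂ)⁻¹ * ∑ j ∈ range M, ∑ σ, (Bhat M Lx Ly v ^ j) ψ σ := by
        simp only [starProjM, LinearMap.smul_apply, LinearMap.sum_apply, Pi.smul_apply,
          Finset.sum_apply, smul_eq_mul, ← Finset.mul_sum]
        rw [Finset.sum_comm]
    _ = (M : ℂ)⁻¹ * ∑ j ∈ range M, ∑ σ, ψ σ := by simp only [Bhat, sop_pow, sum_sop_apply]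
    _ = ∑ σ, ψ σ := by rw [sum_const, card_range, nsmul_eq_mul, inv_mul_cancel_left₀ hM]

def starProjProd : Module.End ℂ (QuditSpace (Bond Lx Ly) M) :=
  univ.noncommProd (fun v => starProjM M Lx Ly v) fun v _ w _ _ => starProjM_commute M Lx Ly v w

lemma phiM_eq_starProjProd_apply : PhiM M Lx Ly = starProjProd M Lx Ly (delta0M M Lx Ly) := rfl

lemma bhat_mul_starProjProd (v : Vertex Lx Ly) :
    Bhat M Lx Ly v * starProjProd M Lx Ly = starProjProd M Lx Ly := by
  have hsplit := univ.mul_noncommProd_erase (mem_univ v) (fun v => starProjM M Lx Ly v)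
    fun v _ w _ _ => starProjM_commute M Lx Ly v w
  rw [starProjProd, ← hsplit, ← mul_assoc, bhat_mul_starProjM]

lemma cop_commute_starProjProd {u : Bond Lx Ly → ZMod M}
    (h : ∀ v : Vertex Lx Ly, ∑ b, u b * starVec M Lx Ly v b = 0) :
    Commute (Cop u) (starProjProd M Lx Ly) :=
  univ.noncommProd_commute _ _ _ fun v _ => cop_commute_starProjM M Lx Ly (h v)

lemma cop_delta0M (u : Bond Lx Ly → ZMod M) : Cop u (delta0M M Lx Ly) = delta0M M Lx Ly := by
  ext σ
  by_cases hσ : σ = 0 <;> simp [Cop, delta0M, hσ]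

lemma cop_phiM {u : Bond Lx Ly → ZMod M}
    (h : ∀ v : Vertex Lx Ly, ∑ b, u b * starVec M Lx Ly v b = 0) :
    Cop u (PhiM M Lx Ly) = PhiM M Lx Ly := by
  rw [phiM_eq_starProjProd_apply, ← Module.End.mul_apply, (cop_commute_starProjProd M Lx Ly h).eq,
    Module.End.mul_apply, cop_delta0M]

lemma sum_phiM [NeZero M] : ∑ σ, PhiM M Lx Ly σ = 1 := by
  have hP : starProjProd M Lx Ly ∈ sumPreserving (Bond Lx Ly) M :=
    Submonoid.noncommProd_mem _ _ _ _ fun v _ => starProjM_mem_sumPreserving M Lx Ly v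
  rw [phiM_eq_starProjProd_apply, hP]
  simp [delta0M]

lemma sum_mul_starVec (u : Bond Lx Ly → ZMod M) (v : Vertex Lx Ly) :
    ∑ b, u b * starVec M Lx Ly v b
      = u (v, 0) + u (v, 1) - u ((v.1 - 1, v.2), 0) - u ((v.1, v.2 - 1), 1) := by
  simp only [starVec, mul_add, Finset.sum_add_distrib, mul_ite, mul_one, mul_zero,
    Finset.sum_ite_eq', Finset.mem_univ, if_true]
  ring

lemma plaqVec_orthogonal_starVec (p v : Vertex Lx Ly) :
    ∑ b, plaqVec M Lx Ly p b * starVec M Lx Ly v b = 0 := by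
  rw [sum_mul_starVec]
  have h01 : (0 : Fin 2) ≠ 1 := by decide
  simp only [plaqVec, Prod.ext_iff, h01, h01.symm, and_true, and_false, if_false, add_zero,
    sub_eq_iff_eq_add]
  split_ifs <;> ring

lemma wilsonVec_orthogonal_starVec (x : ZMod Lx) (v : Vertex Lx Ly) :
    ∑ b : Bond Lx Ly, (if b.1.1 = x ∧ b.2 = 1 then (1 : ZMod M) else 0) * starVec M Lx Ly v b
      = 0 := by
  rw [sum_mul_starVec]
  by_cases h : v.1 = x <;> simp [h]

theorem PhiM_ground_state_general (M Lx Ly : ℕ) [NeZero Lx] [NeZero Ly]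
    (hM : 2 ≤ M) :
    PhiM M Lx Ly ≠ 0 ∧
      (∀ v : Vertex Lx Ly, Ahat M Lx Ly v (PhiM M Lx Ly) = PhiM M Lx Ly) ∧
      (∀ v : Vertex Lx Ly, Bhat M Lx Ly v (PhiM M Lx Ly) = PhiM M Lx Ly) ∧
      (∀ x : ZMod Lx, What M Lx Ly x (PhiM M Lx Ly) = PhiM M Lx Ly) := by
  have : NeZero M := ⟨by omega⟩
  refine ⟨fun h => ?_, fun v => ?_, fun v => ?_, fun x => ?_⟩
  · simpa [h] using sum_phiM M Lx Ly
  · exact cop_phiM M Lx Ly fun w => plaqVec_orthogonal_starVec M Lx Ly v w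
  · rw [phiM_eq_starProjProd_apply, ← Module.End.mul_apply, bhat_mul_starProjProd]
  · exact cop_phiM M Lx Ly fun w => wilsonVec_orthogonal_starVec M Lx Ly x w

/-- the unnormalized `ℤ_M` zero-flux ground state
`Φ_M = (∏_v (1/M) ∑_{j<M} B̂_v^j) δ₀` is nonzero and is fixed by every
plaquette operator `Â_{(x,y)}`, every star operator `B̂_v`, and every vertical
clock Wilson loop `Ŵ_x`. -/
theorem PhiM_ground_state (M Lx Ly : ℕ) [NeZero Lx] [NeZero Ly]
    (hM : 2 ≤ M) (hLx : 2 ≤ Lx) (hLy : 2 ≤ Ly) :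
    PhiM M Lx Ly ≠ 0 ∧
      (∀ v : Vertex Lx Ly, Ahat M Lx Ly v (PhiM M Lx Ly) = PhiM M Lx Ly) ∧
      (∀ v : Vertex Lx Ly, Bhat M Lx Ly v (PhiM M Lx Ly) = PhiM M Lx Ly) ∧
      (∀ x : ZMod Lx, What M Lx Ly x (PhiM M Lx Ly) = PhiM M Lx Ly) :=
  PhiM_ground_state_general M Lx Ly hM
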